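/- arXiv:2303.05341 — 2 statements merged into one kernel-verified Lean document; each statement's English description precedes it below -/
import Mathlib

section
/- Fix a > 2, λ > 0 and h ∈ ℝ, and define the SCAD-thresholding value f(h) by: f(h) = S(h, λ) if |h| ≤ 2λ; f(h) = S(h, aλ/(a−1))/(1 − 1/(a−1)) if 2λ < |h| ≤ aλ; and f(h) = h if |h| > aλ, where S(h, t) = sign(h)·(|h| − t)_+ is the soft-thresholding operator. Then f(h) is a global minimizer over β ∈ ℝ of the function β ↦ (1/2)(β − h)² + p_λ(|β|). -/
/-- The SCAD penalty derivative: for `u > 0`,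
`p'_λ(u) = λ·[1(u ≤ λ) + ((aλ − u)₊/((a−1)λ))·1(u > λ)]`. -/
noncomputable def scadDeriv (a lam u : ℝ) : ℝ :=
  lam * ((if u ≤ lam then 1 else 0) +
    (max (a * lam - u) 0) / ((a - 1) * lam) * (if lam < u then 1 else 0))

/-- The SCAD penalty `p_λ(u) = ∫₀ᵘ p'_λ(t) dt`. -/
noncomputable def scadPenalty (a lam u : ℝ) : ℝ :=
  ∫ t in (0 : ℝ)..u, scadDeriv a lam t

/-- Soft-thresholding operator `S(h, t) = sign(h)·(|h| − t)₊`. -/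
noncomputable def softThresh (h t : ℝ) : ℝ :=
  Real.sign h * max (|h| - t) 0

/-- The SCAD-thresholding value: `S(h, λ)` if `|h| ≤ 2λ`;
`S(h, aλ/(a−1))/(1 − 1/(a−1))` if `2λ < |h| ≤ aλ`; and `h` if `|h| > aλ`. -/
noncomputable def scadThresh (a lam h : ℝ) : ℝ :=
  if |h| ≤ 2 * lam then softThresh h lam
  else if |h| ≤ a * lam then softThresh h (a * lam / (a - 1)) / (1 - 1 / (a - 1))
  else h

/-!
For `β ≥ 0` the objective equals `h² / 2 + ∫₀^β (t + p'_λ(t) - h) dt`, and the integrand is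
nondecreasing because on `[λ, aλ]` the derivative `p'_λ` falls with slope `-1/(a-1) ≥ -1`. So the
objective is convex on `[0, ∞)` and lies above its supporting line at `T = scadThresh a lam h`;
it remains to check the first-order condition at `T`: `T + p'_λ(T) = h` on each of the three
pieces, or `T = 0` and `h ≤ λ = p'_λ(0)`. Negative `h` follow because `T` is odd in `h`, and for
`h ≥ 0` replacing `β` by `|β|` does not increase `(β - h)²`.
-/

theorem Monotone.integral_add_mul_sub_le {g : ℝ → ℝ} (hg : Monotone g) (c x y : ℝ) :
    (∫ t in c..x, g t) + g x * (y - x) ≤ ∫ t in c..y, g t := by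
  have hint : ∀ u v : ℝ, IntervalIntegrable g MeasureTheory.volume u v :=
    fun _ _ => hg.intervalIntegrable
  have hgap : 0 ≤ ∫ t in x..y, (g t - g x) := by
    rcases le_total x y with hxy | hyx
    · exact intervalIntegral.integral_nonneg hxy fun t ht => sub_nonneg.2 (hg ht.1)
    · rw [intervalIntegral.integral_symm, ← intervalIntegral.integral_neg]
      exact intervalIntegral.integral_nonneg hyx fun t ht => neg_nonneg.2 (sub_nonpos.2 (hg ht.2))
  rw [intervalIntegral.integral_sub (hint x y) intervalIntegrable_const,
    intervalIntegral.integral_const, smul_eq_mul,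
    ← intervalIntegral.integral_interval_sub_left (hint c y) (hint c x)] at hgap
  linarith

section

variable {a lam : ℝ}

theorem scadDeriv_of_le {t : ℝ} (ht : t ≤ lam) : scadDeriv a lam t = lam := by
  simp [scadDeriv, ht, not_lt.2 ht]

theorem scadDeriv_of_lt_of_le (ha : 1 < a) (hlam : 0 < lam) {t : ℝ} (h₁ : lam < t)
    (h₂ : t ≤ a * lam) : scadDeriv a lam t = (a * lam - t) / (a - 1) := by
  have : a - 1 ≠ 0 := by linarith
  simp only [scadDeriv, if_neg (not_le.2 h₁), if_pos h₁, max_eq_left (sub_nonneg.2 h₂)]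
  field_simp
  ring

theorem scadDeriv_of_le_of_lt {t : ℝ} (h₁ : lam < t) (h₂ : a * lam ≤ t) :
    scadDeriv a lam t = 0 := by
  simp [scadDeriv, not_le.2 h₁, max_eq_right (sub_nonpos.2 h₂)]

theorem scadDeriv_eq_min (ha : 1 < a) (hlam : 0 < lam) (t : ℝ) :
    scadDeriv a lam t = min lam (max (a * lam - t) 0 / (a - 1)) := by
  have ha₁ : 0 < a - 1 := by linarith
  rcases le_or_gt t lam with h₁ | h₁
  · rw [scadDeriv_of_le h₁, min_eq_left]
    rw [le_div_iff₀ ha₁]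
    exact le_max_of_le_left (by nlinarith)
  rcases le_or_gt t (a * lam) with h₂ | h₂
  · rw [scadDeriv_of_lt_of_le ha hlam h₁ h₂, max_eq_left (by linarith), min_eq_right]
    rw [div_le_iff₀ ha₁]
    nlinarith
  · rw [scadDeriv_of_le_of_lt h₁ h₂.le, max_eq_right (by linarith), zero_div,
      min_eq_right hlam.le]

theorem continuous_scadDeriv (ha : 1 < a) (hlam : 0 < lam) : Continuous (scadDeriv a lam) := by
  rw [funext (scadDeriv_eq_min ha hlam)]
  fun_prop

theorem monotone_add_scadDeriv (ha : 2 ≤ a) (hlam : 0 < lam) :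
    Monotone fun t => t + scadDeriv a lam t := by
  have ha₁ : 0 < a - 1 := by linarith
  have hform : (fun t => t + scadDeriv a lam t) =
      fun t => min (t + lam) (max ((a - 2) / (a - 1) * t + a * lam / (a - 1)) t) := by
    funext t
    rw [scadDeriv_eq_min (by linarith) hlam, ← min_add_add_left, ← max_div_div_right ha₁.le,
      zero_div, ← max_add_add_left, add_zero]
    congr 2
    field_simp
    ring
  rw [hform]
  exact (monotone_id.add_const lam).min
    (((monotone_id.const_mul (div_nonneg (by linarith) ha₁.le)).add_const _).max monotone_id)

theorem half_sq_sub_add_scadPenalty (ha : 1 < a) (hlam : 0 < lam) (h β : ℝ) :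
    1 / 2 * (β - h) ^ 2 + scadPenalty a lam β =
      1 / 2 * h ^ 2 + ∫ t in (0 : ℝ)..β, (t + scadDeriv a lam t - h) := by
  rw [intervalIntegral.integral_sub
      (intervalIntegral.intervalIntegrable_id.add
        ((continuous_scadDeriv ha hlam).intervalIntegrable _ _))
      intervalIntegrable_const,
    intervalIntegral.integral_add intervalIntegral.intervalIntegrable_id
      ((continuous_scadDeriv ha hlam).intervalIntegrable _ _),
    integral_id, intervalIntegral.integral_const, smul_eq_mul, scadPenalty]
  ring

theorem softThresh_of_nonneg {h t : ℝ} (hh : 0 ≤ h) (ht : 0 ≤ t) :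
    softThresh h t = max (h - t) 0 := by
  rcases hh.eq_or_lt with rfl | hpos
  · simp [softThresh, ht]
  · rw [softThresh, abs_of_pos hpos, Real.sign_of_pos hpos, one_mul]

theorem scadThresh_neg (h : ℝ) : scadThresh a lam (-h) = -scadThresh a lam h := by
  simp only [scadThresh, softThresh, abs_neg, Real.sign_neg]
  split_ifs <;> ring

theorem scadThresh_of_le_two_mul (hlam : 0 ≤ lam) {h : ℝ} (hh : 0 ≤ h) (h₂ : h ≤ 2 * lam) :
    scadThresh a lam h = max (h - lam) 0 := by
  rw [scadThresh, abs_of_nonneg hh, if_pos h₂, softThresh_of_nonneg hh hlam]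

theorem scadThresh_of_lt_of_le (ha : 2 < a) (hlam : 0 < lam) {h : ℝ} (h₁ : 2 * lam < h)
    (h₂ : h ≤ a * lam) : scadThresh a lam h = ((a - 1) * h - a * lam) / (a - 2) := by
  have ha₁ : 0 < a - 1 := by linarith
  have hcut : a * lam / (a - 1) ≤ h := by
    rw [div_le_iff₀ ha₁]
    nlinarith
  rw [scadThresh, abs_of_pos (by linarith), if_neg (not_le.2 h₁), if_pos h₂,
    softThresh_of_nonneg (by linarith) (by positivity), max_eq_left (sub_nonneg.2 hcut),
    one_sub_div ha₁.ne', sub_div' ha₁.ne', div_div_div_cancel_right₀ ha₁.ne']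
  ring

theorem scadThresh_of_lt (ha : 2 < a) (hlam : 0 < lam) {h : ℝ} (h₁ : a * lam < h) :
    scadThresh a lam h = h := by
  rw [scadThresh, abs_of_pos (by nlinarith), if_neg (by nlinarith), if_neg (not_le.2 h₁)]

theorem scadThresh_variational (ha : 2 < a) (hlam : 0 < lam) {h : ℝ} (hh : 0 ≤ h) :
    0 ≤ scadThresh a lam h ∧ ∀ b, 0 ≤ b →
      0 ≤ (scadThresh a lam h + scadDeriv a lam (scadThresh a lam h) - h) *
        (b - scadThresh a lam h) := by
  rcases le_or_gt h lam with h₁ | h₁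
  · have hT : scadThresh a lam h = 0 := by
      rw [scadThresh_of_le_two_mul hlam.le hh (by linarith), max_eq_right (by linarith)]
    refine ⟨hT.ge, fun b hb => ?_⟩
    rw [hT, scadDeriv_of_le hlam.le]
    nlinarith
  rcases le_or_gt h (2 * lam) with h₂ | h₂
  · have hT : scadThresh a lam h = h - lam := by
      rw [scadThresh_of_le_two_mul hlam.le hh h₂, max_eq_left (by linarith)]
    refine ⟨by linarith, fun b _ => ?_⟩
    rw [hT, scadDeriv_of_le (by linarith)]
    simp
  rcases le_or_gt h (a * lam) with h₃ | h₃
  · have ha₂ : 0 < a - 2 := by linarith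
    set T := ((a - 1) * h - a * lam) / (a - 2) with hT_def
    have hT : scadThresh a lam h = T := scadThresh_of_lt_of_le ha hlam h₂ h₃
    have hT₁ : lam < T := by
      rw [hT_def, lt_div_iff₀ ha₂]
      nlinarith
    have hT₂ : T ≤ a * lam := by
      rw [hT_def, div_le_iff₀ ha₂]
      nlinarith
    refine ⟨by rw [hT]; linarith, fun b _ => ?_⟩
    have hstat : T + (a * lam - T) / (a - 1) = h := by
      have : a - 1 ≠ 0 := by linarith
      have : a - 2 ≠ 0 := by linarith
      rw [hT_def]
      field_simp
      ring
    rw [hT, scadDeriv_of_lt_of_le (by linarith) hlam hT₁ hT₂, hstat]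
    simp
  · rw [scadThresh_of_lt ha hlam h₃, scadDeriv_of_le_of_lt (by nlinarith) h₃.le]
    exact ⟨hh, fun b _ => by simp⟩

theorem half_sq_sub_add_scadPenalty_scadThresh_le (ha : 2 < a) (hlam : 0 < lam) {h b : ℝ}
    (hh : 0 ≤ h) (hb : 0 ≤ b) :
    1 / 2 * (scadThresh a lam h - h) ^ 2 + scadPenalty a lam (scadThresh a lam h) ≤
      1 / 2 * (b - h) ^ 2 + scadPenalty a lam b := by
  obtain ⟨-, hopt⟩ := scadThresh_variational ha hlam hh
  have hsupp := ((monotone_add_scadDeriv ha.le hlam).add_const (-h)).integral_add_mul_sub_le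
    0 (scadThresh a lam h) b
  simp only [← sub_eq_add_neg] at hsupp
  rw [half_sq_sub_add_scadPenalty (by linarith) hlam,
    half_sq_sub_add_scadPenalty (by linarith) hlam]
  linarith [hopt b hb]

end

/-- For `a > 2`, `λ > 0` and `h ∈ ℝ`, the SCAD-thresholding value is a global minimizer
over `β ∈ ℝ` of `β ↦ (1/2)(β − h)² + p_λ(|β|)`. -/
theorem scadThresh_is_min (a lam h : ℝ) (ha : 2 < a) (hlam : 0 < lam) :
    ∀ β : ℝ,
      (1 / 2) * (scadThresh a lam h - h) ^ 2 + scadPenalty a lam |scadThresh a lam h| ≤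
        (1 / 2) * (β - h) ^ 2 + scadPenalty a lam |β| := by
  intro β
  wlog hh : 0 ≤ h generalizing h β
  · have hsymm := this (-h) (-β) (by linarith)
    have hsq : ∀ x y : ℝ, (-x - -y) ^ 2 = (x - y) ^ 2 := fun _ _ => by ring
    rwa [scadThresh_neg, abs_neg, abs_neg, hsq, hsq] at hsymm
  have hT : 0 ≤ scadThresh a lam h := (scadThresh_variational ha hlam hh).1
  calc (1 / 2) * (scadThresh a lam h - h) ^ 2 + scadPenalty a lam |scadThresh a lam h|
      ≤ 1 / 2 * (|β| - h) ^ 2 + scadPenalty a lam |β| := by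
        rw [abs_of_nonneg hT]
        exact half_sq_sub_add_scadPenalty_scadThresh_le ha hlam hh (abs_nonneg β)
    _ ≤ (1 / 2) * (β - h) ^ 2 + scadPenalty a lam |β| := by
        have : (|β| - h) ^ 2 ≤ (β - h) ^ 2 :=
          sq_le_sq.2 (by simpa [abs_of_nonneg hh] using abs_abs_sub_abs_le_abs_sub β h)
        linarith
end

section
/- Let p : [0,∞) → ℝ be differentiable with derivative p' Lipschitz continuous with constant b ≥ 0. Then for any s ≥ 1 and any β, β₀ ∈ ℝ^s, |Σ_{j=1}^s {p(|β_j|) − p(|β_{j0}|)}| ≤ √s · (max_{1≤j≤s} |p'(|β_{j0}|)|) · ‖β − β₀‖ + (b/2)·‖β − β₀‖², where ‖·‖ is the Euclidean norm. -/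
/-!
A function whose derivative is `b`-Lipschitz stays within `(b/2)(v - u)²` of its tangent line
at `u`. Applied termwise at `u = |β₀ⱼ|`, `v = |βⱼ|`, together with `||βⱼ| - |β₀ⱼ|| ≤ |βⱼ - β₀ⱼ|`,
this bounds the sum by `max |p'(|β₀ⱼ|)| · ‖β - β₀‖₁ + (b/2)‖β - β₀‖²`, and Cauchy–Schwarz gives
`‖β - β₀‖₁ ≤ √s ‖β - β₀‖`.
-/

open Finset

open Set in
theorem norm_sub_sub_smul_deriv_le_of_lipschitz {E : Type*} [NormedAddCommGroup E]
    [NormedSpace ℝ E] {p p' : ℝ → E} {s : Set ℝ} {b u v : ℝ} (hs : Convex ℝ s)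
    (hderiv : ∀ x ∈ s, HasDerivWithinAt p (p' x) s x)
    (hlip : ∀ x ∈ s, ∀ y ∈ s, ‖p' x - p' y‖ ≤ b * |x - y|) (hu : u ∈ s) (hv : v ∈ s) :
    ‖p v - p u - (v - u) • p' u‖ ≤ b / 2 * (v - u) ^ 2 := by
  set d := v - u
  let γ : ℝ → ℝ := fun t => u + t * d
  have hγ : MapsTo γ (Icc 0 1) s := fun t ht => hs.add_smul_sub_mem hu hv ht
  let f : ℝ → E := fun t => p (γ t) - p u - (t * d) • p' u
  let f' : ℝ → E := fun t => d • (p' (γ t) - p' u)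
  have hf : ∀ t ∈ Icc (0 : ℝ) 1, HasDerivWithinAt f (f' t) (Icc 0 1) t := by
    intro t ht
    have hγ' : HasDerivAt γ d t := (hasDerivAt_mul_const d).const_add u
    have := (((hderiv _ (hγ ht)).scomp t hγ'.hasDerivWithinAt hγ).sub_const (p u)).sub
      ((hasDerivAt_mul_const d).hasDerivWithinAt.smul_const (p' u))
    exact this.congr_deriv (smul_sub _ _ _).symm
  have hf_right : ∀ t ∈ Ico (0 : ℝ) 1, HasDerivWithinAt f (f' t) (Ici t) t := fun t ht =>
    (hf t (Ico_subset_Icc_self ht)).mono_of_mem_nhdsWithin (Icc_mem_nhdsGE_of_mem ht)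
  -- `t ↦ b d² t² / 2` dominates `f` since `‖f' t‖ ≤ b d² t`, the derivative of the former
  have hB : ∀ t, HasDerivAt (fun t => b / 2 * d ^ 2 * t ^ 2) (b * d ^ 2 * t) t := fun t => by
    refine ((hasDerivAt_pow 2 t).const_mul (b / 2 * d ^ 2)).congr_deriv ?_
    norm_num; ring
  have hbound : ∀ t ∈ Ico (0 : ℝ) 1, ‖f' t‖ ≤ b * d ^ 2 * t := by
    intro t ht
    calc ‖f' t‖ = |d| * ‖p' (γ t) - p' u‖ := norm_smul _ _
      _ ≤ |d| * (b * |γ t - u|) := by gcongr; exact hlip _ (hγ (Ico_subset_Icc_self ht)) u hu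
      _ = b * d ^ 2 * t := by
        simp only [γ, add_sub_cancel_left, abs_mul, abs_of_nonneg ht.1]
        rw [← sq_abs d]; ring
  have := image_norm_le_of_norm_deriv_right_le_deriv_boundary
    (fun t ht => (hf t ht).continuousWithinAt) hf_right (by simp [f, γ]) hB hbound
    (right_mem_Icc.2 zero_le_one)
  simpa [f, γ, d] using this

theorem norm_sub_le_of_lipschitz_deriv {E : Type*} [NormedAddCommGroup E]
    [NormedSpace ℝ E] {p p' : ℝ → E} {s : Set ℝ} {b u v : ℝ} (hs : Convex ℝ s)
    (hderiv : ∀ x ∈ s, HasDerivWithinAt p (p' x) s x)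
    (hlip : ∀ x ∈ s, ∀ y ∈ s, ‖p' x - p' y‖ ≤ b * |x - y|) (hu : u ∈ s) (hv : v ∈ s) :
    ‖p v - p u‖ ≤ ‖p' u‖ * |v - u| + b / 2 * (v - u) ^ 2 :=
  calc ‖p v - p u‖ = ‖(v - u) • p' u + (p v - p u - (v - u) • p' u)‖ := by
        rw [add_sub_cancel]
    _ ≤ ‖p' u‖ * |v - u| + b / 2 * (v - u) ^ 2 := by
        grw [norm_add_le, norm_smul, Real.norm_eq_abs, mul_comm,
          norm_sub_sub_smul_deriv_le_of_lipschitz hs hderiv hlip hu hv]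

theorem abs_sub_comp_abs_le_of_lipschitz_deriv {p p' : ℝ → ℝ} {b : ℝ} (hb : 0 ≤ b)
    (hderiv : ∀ x ∈ Set.Ici (0 : ℝ), HasDerivWithinAt p (p' x) (Set.Ici 0) x)
    (hlip : ∀ x ∈ Set.Ici (0 : ℝ), ∀ y ∈ Set.Ici (0 : ℝ), |p' x - p' y| ≤ b * |x - y|)
    (x y : ℝ) : |p (|y|) - p (|x|)| ≤ |p' (|x|)| * |y - x| + b / 2 * (y - x) ^ 2 := by
  have hxy : |(|y| - |x|)| ≤ |y - x| := abs_abs_sub_abs_le_abs_sub y x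
  calc |p (|y|) - p (|x|)| ≤ |p' (|x|)| * |(|y| - |x|)| + b / 2 * (|y| - |x|) ^ 2 :=
        norm_sub_le_of_lipschitz_deriv (convex_Ici 0) hderiv hlip (abs_nonneg x) (abs_nonneg y)
    _ ≤ |p' (|x|)| * |y - x| + b / 2 * (y - x) ^ 2 := by
        rw [← sq_abs (|y| - |x|), ← sq_abs (y - x)]
        gcongr

theorem EuclideanSpace.sum_abs_le_sqrt_card_mul_norm {ι : Type*} [Fintype ι]
    (x : EuclideanSpace ℝ ι) : ∑ i, |x i| ≤ √(Fintype.card ι) * ‖x‖ := by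
  simpa [EuclideanSpace.norm_eq] using
    Real.sum_mul_le_sqrt_mul_sqrt univ (fun _ => 1) (fun i => |x i|)

/-- If `p : [0,∞) → ℝ` is differentiable with derivative `p'` Lipschitz with constant
`b ≥ 0`, then for any `s ≥ 1` and `β, β₀ ∈ ℝˢ`,
`|Σⱼ {p(|βⱼ|) − p(|β_{j0}|)}| ≤ √s · maxⱼ|p'(|β_{j0}|)| · ‖β − β₀‖ + (b/2)·‖β − β₀‖²`
in the Euclidean norm. -/
theorem penalty_taylor_bound (p p' : ℝ → ℝ) (b : ℝ) (hb : 0 ≤ b)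
    (hderiv : ∀ u ∈ Set.Ici (0 : ℝ), HasDerivWithinAt p (p' u) (Set.Ici 0) u)
    (hlip : ∀ u ∈ Set.Ici (0 : ℝ), ∀ v ∈ Set.Ici (0 : ℝ), |p' u - p' v| ≤ b * |u - v|)
    (s : ℕ) (hs : 1 ≤ s) (β β₀ : EuclideanSpace ℝ (Fin s)) :
    |∑ j, (p |β j| - p |β₀ j|)| ≤
      Real.sqrt s *
          (Finset.univ.sup' (Finset.univ_nonempty_iff.mpr (Fin.pos_iff_nonempty.mp hs))
            (fun j => |p' (|β₀ j|)|)) * ‖β - β₀‖ +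
        (b / 2) * ‖β - β₀‖ ^ 2 := by
  set M := Finset.univ.sup' _ fun j => |p' (|β₀ j|)|
  have hM : ∀ j, |p' (|β₀ j|)| ≤ M := fun j => le_sup' (fun j => |p' (|β₀ j|)|) (mem_univ j)
  calc |∑ j, (p |β j| - p |β₀ j|)| ≤ ∑ j, |p (|β j|) - p (|β₀ j|)| := abs_sum_le_sum_abs _ _
    _ ≤ ∑ j, (M * |(β - β₀) j| + b / 2 * (β - β₀) j ^ 2) := by
        gcongr with j
        grw [abs_sub_comp_abs_le_of_lipschitz_deriv hb hderiv hlip, hM j]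
        simp
    _ = M * ∑ j, |(β - β₀) j| + b / 2 * ‖β - β₀‖ ^ 2 := by
        rw [sum_add_distrib, ← mul_sum, ← mul_sum, EuclideanSpace.real_norm_sq_eq]
    _ ≤ M * (√s * ‖β - β₀‖) + b / 2 * ‖β - β₀‖ ^ 2 := by
        have hM0 : 0 ≤ M := (abs_nonneg _).trans (hM ⟨0, hs⟩)
        grw [EuclideanSpace.sum_abs_le_sqrt_card_mul_norm, Fintype.card_fin]
    _ = √s * M * ‖β - β₀‖ + b / 2 * ‖β - β₀‖ ^ 2 := by ring
end
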